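/- The misclassification error of the finite-dimensional Bayes-type classifier converges to that of the infinite-dimensional one: ℙ{Γ^{B,d}(X^(d,δ)) ≠ Y} − ℙ{Γ^B(X^(δ)) ≠ Y} → 0 as d → ∞. -/

import Mathlib

/-! Both plug-in rules decide on pattern `k` through a `σ(X^(k))`-measurable region, so replacing
`(2Y - 1) 1{δ = k}` by its conditional expectation `φ_k` shows that the error gap is
`∑ₖ 𝔼[(1{φ_k > 0} - 1{φ_{d,k} > 0}) φ_k]`, and each term lies between `0` and
`‖φ_{d,k} - φ_k‖₁`. Every point of `ℓ₂` is the limit of its finite truncations, so the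
σ-algebras of the first `d` coordinates of `X^(k)` increase to `σ(X^(k))`, and Lévy's upward
theorem gives `φ_{d,k} → φ_k` in `L¹`. -/

open MeasureTheory ProbabilityTheory Filter Topology Finset

noncomputable section

abbrev ell2 : Type := lp (fun _ : ℕ => ℝ) 2

noncomputable instance : MeasurableSpace ell2 := borel _
instance : BorelSpace ell2 := ⟨rfl⟩

namespace ell2

theorem continuous_apply (i : ℕ) : Continuous fun x : ell2 => x i :=
  (_root_.continuous_apply i).comp lp.uniformContinuous_coe.continuous

theorem measurable_restrict (d : ℕ) : Measurable fun (x : ell2) (j : Fin d) => x j :=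
  measurable_pi_lambda _ fun j => (continuous_apply j).measurable

theorem measurable_of_forall_measurable_apply {α : Type*} {m : MeasurableSpace α}
    {f : α → ell2} (hf : ∀ i, Measurable[m] fun a => f a i) : Measurable[m] f := by
  let trunc (n : ℕ) (v : Fin n → ℝ) : ell2 := ∑ j : Fin n, lp.single 2 (j : ℕ) (v j)
  have htrunc : ∀ n, Continuous (trunc n) := fun n =>
    continuous_finsetSum _ fun j _ =>
      (lp.isometry_single (j : ℕ)).continuous.comp (_root_.continuous_apply j)
  refine measurable_of_tendsto_metrizable (f := fun n a => trunc n fun j => f a j)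
    (fun n => (htrunc n).measurable.comp (measurable_pi_lambda _ fun j => hf j)) ?_
  refine tendsto_pi_nhds.2 fun a => ?_
  simpa only [trunc, Fin.sum_univ_eq_sum_range (fun i => lp.single 2 i (f a i))] using
    (lp.hasSum_single ENNReal.ofNat_ne_top (f a)).tendsto_sum_nat

theorem comap_restrict_le_comap {Ω : Type*} (X : Ω → ell2) (d : ℕ) :
    MeasurableSpace.comap (fun ω (j : Fin d) => X ω j) inferInstance ≤
      MeasurableSpace.comap X inferInstance :=
  ((measurable_restrict d).comp (comap_measurable X)).comap_le

end ell2

section CoordinateFiltration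

variable {Ω : Type*} [m₀ : MeasurableSpace Ω] {X : Ω → ell2}

def coordFiltration (hX : Measurable X) : Filtration ℕ m₀ where
  seq d := MeasurableSpace.comap (fun ω (j : Fin d) => X ω j) inferInstance
  mono' d e hde := by
    have hrestrict : Measurable fun (v : Fin e → ℝ) (j : Fin d) => v (Fin.castLE hde j) :=
      measurable_pi_lambda _ fun j => measurable_pi_apply _
    exact (hrestrict.comp (comap_measurable fun ω (j : Fin e) => X ω j)).comap_le
  le' d := ((ell2.measurable_restrict d).comp hX).comap_le

theorem iSup_coordFiltration (hX : Measurable X) :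
    ⨆ d, coordFiltration hX d = MeasurableSpace.comap X inferInstance := by
  refine le_antisymm (iSup_le fun d => ?_)
    (ell2.measurable_of_forall_measurable_apply fun i => ?_).comap_le
  · exact ell2.comap_restrict_le_comap X d
  · exact ((measurable_pi_apply (⟨i, i.lt_succ_self⟩ : Fin (i + 1))).comp
      (comap_measurable _)).mono (le_iSup (coordFiltration hX) (i + 1)) le_rfl

theorem tendsto_eLpNorm_condExp_coords (P : Measure Ω) [IsFiniteMeasure P] (hX : Measurable X)
    (g : Ω → ℝ) :
    Tendsto (fun d => eLpNorm
      (P[g | MeasurableSpace.comap (fun ω (j : Fin d) => X ω j) inferInstance] -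
        P[g | MeasurableSpace.comap X inferInstance]) 1 P) atTop (𝓝 0) := by
  rw [← iSup_coordFiltration hX]
  exact tendsto_eLpNorm_condExp (ℱ := coordFiltration hX) g

end CoordinateFiltration

def posStep (t : ℝ) : ℝ := if 0 < t then 1 else 0

theorem measurable_posStep : Measurable posStep :=
  Measurable.ite (measurableSet_lt measurable_const measurable_id) measurable_const
    measurable_const

theorem abs_posStep_sub_posStep_le (a b : ℝ) : |posStep a - posStep b| ≤ 1 := by
  unfold posStep; split_ifs <;> norm_num

theorem posStep_sub_posStep_mul_self_nonneg (a b : ℝ) : 0 ≤ (posStep a - posStep b) * a := by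
  unfold posStep; split_ifs <;> linarith

theorem posStep_sub_posStep_mul_self_le_abs (a b : ℝ) :
    (posStep a - posStep b) * a ≤ |b - a| := by
  unfold posStep
  split_ifs <;> linarith [abs_nonneg (b - a), le_abs_self (b - a), neg_abs_le (b - a)]

section BayesRule

variable {Ω : Type*} {m m₀ : MeasurableSpace Ω} {P : Measure Ω} [IsFiniteMeasure P]

theorem integral_mul_condExp_of_bound (hm : m ≤ m₀) {f g : Ω → ℝ}
    (hf : StronglyMeasurable[m] f) (c : ℝ) (hfc : ∀ ω, ‖f ω‖ ≤ c)
    (hg : Integrable g P) :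
    ∫ ω, f ω * P[g | m] ω ∂P = ∫ ω, f ω * g ω ∂P :=
  calc ∫ ω, f ω * P[g | m] ω ∂P = ∫ ω, P[f * g | m] ω ∂P :=
        integral_congr_ae (condExp_stronglyMeasurable_mul_of_bound hm hf hg c
          (ae_of_all _ hfc)).symm
    _ = ∫ ω, f ω * g ω ∂P := integral_condExp hm

theorem integral_posStep_condExp_sub_mul_mem_Icc (hm : m ≤ m₀) {g ψ : Ω → ℝ}
    (hg : Integrable g P) (hψ : StronglyMeasurable[m] ψ) (hψi : Integrable ψ P) :
    ∫ ω, (posStep (P[g | m] ω) - posStep (ψ ω)) * g ω ∂P ∈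
      Set.Icc 0 (eLpNorm (ψ - P[g | m]) 1 P).toReal := by
  set φ := P[g | m]
  have hstep : StronglyMeasurable[m] fun ω => posStep (φ ω) - posStep (ψ ω) :=
    ((measurable_posStep.comp stronglyMeasurable_condExp.measurable).sub
      (measurable_posStep.comp hψ.measurable)).stronglyMeasurable
  rw [← integral_mul_condExp_of_bound hm hstep 1 (fun _ => abs_posStep_sub_posStep_le _ _) hg]
  refine ⟨integral_nonneg fun _ => posStep_sub_posStep_mul_self_nonneg _ _, ?_⟩
  calc ∫ ω, (posStep (φ ω) - posStep (ψ ω)) * φ ω ∂P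
      ≤ ∫ ω, ‖(ψ - φ) ω‖ ∂P :=
        integral_mono (integrable_condExp.bdd_mul (hstep.mono hm).aestronglyMeasurable
          (ae_of_all _ fun _ => abs_posStep_sub_posStep_le _ _))
          (hψi.sub integrable_condExp).norm fun _ => posStep_sub_posStep_mul_self_le_abs _ _
    _ = (eLpNorm (ψ - φ) 1 P).toReal := by
        rw [eLpNorm_one_eq_lintegral_enorm,
          integral_norm_eq_lintegral_enorm (hψi.sub integrable_condExp).aestronglyMeasurable]

end BayesRule

section PlugInClassifier

variable {Ω : Type*} [MeasurableSpace Ω] {P : Measure Ω} {M : ℕ} {Y : Ω → ℝ}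
  {δ : Ω → Fin M}

def signedLabel (Y : Ω → ℝ) (δ : Ω → Fin M) (k : Fin M) (ω : Ω) : ℝ :=
  (2 * Y ω - 1) * (if δ ω = k then 1 else 0)

def plugInError (P : Measure Ω) (Y : Ω → ℝ) (δ : Ω → Fin M) (score : Fin M → Ω → ℝ) :
    ℝ :=
  (P {ω | (∑ k, (if δ ω = k then (1 : ℝ) else 0) * posStep (score k ω)) ≠ Y ω}).toReal

theorem integrable_signedLabel [IsFiniteMeasure P] (hY : Measurable Y)
    (hY01 : ∀ ω, Y ω = 0 ∨ Y ω = 1) (hδ : Measurable δ) (k : Fin M) :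
    Integrable (signedLabel Y δ k) P := by
  refine .of_bound (((hY.const_mul 2).sub_const 1).mul
    (Measurable.ite (hδ (measurableSet_singleton k)) measurable_const
      measurable_const)).aestronglyMeasurable 1 (ae_of_all _ fun ω => ?_)
  rcases hY01 ω with h | h <;> simp only [signedLabel, h] <;> split_ifs <;> norm_num

theorem ite_posStep_ne_sub_ite_posStep_ne (a b : ℝ) {y : ℝ} (hy : y = 0 ∨ y = 1) :
    ((if posStep b ≠ y then 1 else 0) - (if posStep a ≠ y then 1 else 0) : ℝ) =
      (posStep a - posStep b) * (2 * y - 1) := by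
  rcases hy with rfl | rfl <;> unfold posStep <;> split_ifs <;> norm_num at *

theorem measurableSet_plugIn_ne (hY : Measurable Y) (hδ : Measurable δ)
    {score : Fin M → Ω → ℝ} (hscore : ∀ k, Measurable (score k)) :
    MeasurableSet
      {ω | (∑ k, (if δ ω = k then (1 : ℝ) else 0) * posStep (score k ω)) ≠ Y ω} :=
  (measurableSet_eq_fun (Finset.measurable_sum _ fun k _ =>
    (Measurable.ite (hδ (measurableSet_singleton k)) measurable_const measurable_const).mul
      (measurable_posStep.comp (hscore k))) hY).compl

theorem plugInError_sub_plugInError [IsFiniteMeasure P] (hY : Measurable Y)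
    (hY01 : ∀ ω, Y ω = 0 ∨ Y ω = 1) (hδ : Measurable δ) {a b : Fin M → Ω → ℝ}
    (ha : ∀ k, Measurable (a k)) (hb : ∀ k, Measurable (b k)) :
    plugInError P Y δ b - plugInError P Y δ a =
      ∑ k, ∫ ω, (posStep (a k ω) - posStep (b k ω)) * signedLabel Y δ k ω ∂P := by
  have hint k :
      Integrable (fun ω => (posStep (a k ω) - posStep (b k ω)) * signedLabel Y δ k ω) P :=
    (integrable_signedLabel hY hY01 hδ k).bdd_mul
      ((measurable_posStep.comp (ha k)).sub
        (measurable_posStep.comp (hb k))).aestronglyMeasurable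
      (ae_of_all _ fun _ => abs_posStep_sub_posStep_le _ _)
  rw [plugInError, plugInError, ← measureReal_def, ← measureReal_def,
    ← integral_indicator_one (measurableSet_plugIn_ne hY hδ hb),
    ← integral_indicator_one (measurableSet_plugIn_ne hY hδ ha),
    ← integral_sub ((integrable_const 1).indicator (measurableSet_plugIn_ne hY hδ hb))
      ((integrable_const 1).indicator (measurableSet_plugIn_ne hY hδ ha)),
    ← integral_finsetSum _ fun k _ => hint k]
  refine integral_congr_ae (ae_of_all _ fun ω => ?_)
  simpa [Set.indicator_apply, signedLabel, ite_mul, mul_ite] using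
    ite_posStep_ne_sub_ite_posStep_ne (a (δ ω) ω) (b (δ ω) ω) (hY01 ω)

end PlugInClassifier

theorem finite_dim_bayes_error_tendsto_general
    {Ω : Type} [MeasurableSpace Ω] (P : Measure Ω) [IsProbabilityMeasure P]
    (M : ℕ)
    (Y : Ω → ℝ) (hYmeas : Measurable Y) (hY01 : ∀ ω, Y ω = 0 ∨ Y ω = 1)
    (δ : Ω → Fin M) (hδ : Measurable δ)
    (X : Fin M → Ω → ell2) (hX : ∀ k, Measurable (X k))
    (φ : Fin M → Ω → ℝ)
    (hφ : ∀ k, φ k =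
      P[(fun ω => (2 * Y ω - 1) * (if δ ω = k then (1:ℝ) else 0)) |
        MeasurableSpace.comap (X k) inferInstance])
    -- `φd d k` is the finite-dimensional conditional expectation given the first `d` coordinates
    (φd : ℕ → Fin M → Ω → ℝ)
    (hφd : ∀ d k, φd d k =
      P[(fun ω => (2 * Y ω - 1) * (if δ ω = k then (1:ℝ) else 0)) |
        MeasurableSpace.comap (fun ω => fun j : Fin d => X k ω (j : ℕ)) inferInstance]) :
    Tendsto (fun d : ℕ =>
        (P {ω | (∑ k, (if δ ω = k then (1:ℝ) else 0) * (if 0 < φd d k ω then (1:ℝ) else 0)) ≠ Y ω}).toReal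
          - (P {ω | (∑ k, (if δ ω = k then (1:ℝ) else 0) * (if 0 < φ k ω then (1:ℝ) else 0)) ≠ Y ω}).toReal)
      atTop (nhds 0) := by
  change Tendsto (fun d => plugInError P Y δ (φd d) - plugInError P Y δ φ) atTop (𝓝 0)
  have hle k : MeasurableSpace.comap (X k) inferInstance ≤ ‹MeasurableSpace Ω› :=
    (hX k).comap_le
  have hφd_sm d k : StronglyMeasurable[MeasurableSpace.comap (X k) inferInstance] (φd d k) :=
    hφd d k ▸ stronglyMeasurable_condExp.mono (ell2.comap_restrict_le_comap (X k) d)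
  have hφ_meas k : Measurable (φ k) :=
    hφ k ▸ (stronglyMeasurable_condExp.mono (hle k)).measurable
  have hgap d k :
      ∫ ω, (posStep (φ k ω) - posStep (φd d k ω)) * signedLabel Y δ k ω ∂P ∈
        Set.Icc 0 (eLpNorm (φd d k - φ k) 1 P).toReal := by
    rw [hφ k]
    exact integral_posStep_condExp_sub_mul_mem_Icc (hle k)
      (integrable_signedLabel hYmeas hY01 hδ k) (hφd_sm d k) (hφd d k ▸ integrable_condExp)
  have hlevy k : Tendsto (fun d => (eLpNorm (φd d k - φ k) 1 P).toReal) atTop (𝓝 0) := by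
    simp only [hφd _ k, hφ k, ← ENNReal.toReal_zero]
    exact (ENNReal.tendsto_toReal ENNReal.zero_ne_top).comp
      (tendsto_eLpNorm_condExp_coords P (hX k) _)
  have hrepr d := plugInError_sub_plugInError (P := P) hYmeas hY01 hδ hφ_meas
    fun k => ((hφd_sm d k).mono (hle k)).measurable
  refine squeeze_zero (fun d => hrepr d ▸ sum_nonneg fun k _ => (hgap d k).1)
    (fun d => hrepr d ▸ sum_le_sum fun k _ => (hgap d k).2) ?_
  simpa using tendsto_finsetSum univ fun k _ => hlevy k

/-- The misclassification error of the finite-dimensional Bayes-type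
classifier converges to that of the infinite-dimensional one:
`ℙ{Γ^{B,d}(X^(d,δ)) ≠ Y} − ℙ{Γ^B(X^(δ)) ≠ Y} → 0` as `d → ∞`. -/
theorem finite_dim_bayes_error_tendsto
    {Ω : Type} [MeasurableSpace Ω] (P : Measure Ω) [IsProbabilityMeasure P]
    (M : ℕ) (hM : 1 ≤ M)
    (Y : Ω → ℝ) (hYmeas : Measurable Y) (hY01 : ∀ ω, Y ω = 0 ∨ Y ω = 1)
    (δ : Ω → Fin M) (hδ : Measurable δ)
    (X : Fin M → Ω → ell2) (hX : ∀ k, Measurable (X k))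
    (φ : Fin M → Ω → ℝ)
    (hφ : ∀ k, φ k =
      P[(fun ω => (2 * Y ω - 1) * (if δ ω = k then (1:ℝ) else 0)) |
        MeasurableSpace.comap (X k) inferInstance])
    -- `φd d k` is the finite-dimensional conditional expectation given the first `d` coordinates
    (φd : ℕ → Fin M → Ω → ℝ)
    (hφd : ∀ d k, φd d k =
      P[(fun ω => (2 * Y ω - 1) * (if δ ω = k then (1:ℝ) else 0)) |
        MeasurableSpace.comap (fun ω => fun j : Fin d => X k ω (j : ℕ)) inferInstance]) :
    Tendsto (fun d : ℕ =>
        (P {ω | (∑ k, (if δ ω = k then (1:ℝ) else 0) * (if 0 < φd d k ω then (1:ℝ) else 0)) ≠ Y ω}).toReal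
          - (P {ω | (∑ k, (if δ ω = k then (1:ℝ) else 0) * (if 0 < φ k ω then (1:ℝ) else 0)) ≠ Y ω}).toReal)
      atTop (nhds 0) :=
  finite_dim_bayes_error_tendsto_general P M Y hYmeas hY01 δ hδ X hX φ hφ φd hφd
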